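/- Let n be an integer with n ≥ 4 and let a be a real number such that g_n(a;x) ≥ 0 for all x ∈ [−1,1]. Then a ≤ 1/(1 + cos(π/n)) when n is even, and a ≤ 1/(1 + cos(2π/n)) when n is odd. Specifically, at the points x_k = cos(kπ/n) (the zeros of T_n′) one has g_n(a; x_k) = 2 + (−1)^k − a·(1 − x_k), and applying this with k = n−1 for even n and k = n−2 for odd n yields the stated bounds. -/

import Mathlib

open Polynomial Real

/-- The `n`-th Chebyshev polynomial of the first kind, as a real polynomial. -/
noncomputable def chebT (n : ℕ) : Polynomial ℝ := Polynomial.Chebyshev.T ℝ (n : ℤ)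

/-- `g n a x = T_n(x) + 2 - ((x+2)/n²) T_n'(x) - a ((1-x)/n²) (n² - T_n'(x))`. -/
noncomputable def g (n : ℕ) (a x : ℝ) : ℝ :=
  (chebT n).eval x + 2 - (x + 2) / (n : ℝ) ^ 2 * (derivative (chebT n)).eval x
    - a * ((1 - x) / (n : ℝ) ^ 2) * ((n : ℝ) ^ 2 - (derivative (chebT n)).eval x)

/-!
At an interior extremum `x_k = cos (kπ/n)` of `T_n` the derivative vanishes and `T_n(x_k) = (-1)^k`,
so `g_n(a; x_k) = 2 + (-1)^k - a (1 - x_k)`. For `n - k` odd, `x_k = -cos ((n-k)π/n)` and this value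
is `1 - a (1 + cos ((n-k)π/n))`; its nonnegativity bounds `a`. Take `n - k = 1` for even `n` and
`n - k = 2` for odd `n`.
-/

theorem chebT_eval_cos_mul_pi_div {n : ℕ} (hn : n ≠ 0) (k : ℕ) :
    (chebT n).eval (cos (k * π / n)) = (-1) ^ k := by
  rw [chebT, Chebyshev.T_real_cos, Int.cast_natCast, mul_div_cancel₀ _ (by exact_mod_cast hn),
    cos_nat_mul_pi]

theorem derivative_chebT_eval_cos_mul_pi_div {n k : ℕ} (hk : 0 < k) (hkn : k < n) :
    (derivative (chebT n)).eval (cos (k * π / n)) = 0 := by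
  rw [chebT, ← Polynomial.deriv]
  exact (Chebyshev.isLocalExtr_T_real (by omega) hk hkn).deriv_eq_zero

theorem g_cos_mul_pi_div {n k : ℕ} (hk : 0 < k) (hkn : k < n) (a : ℝ) :
    g n a (cos (k * π / n)) = 2 + (-1) ^ k - a * (1 - cos (k * π / n)) := by
  have hn : (n : ℝ) ≠ 0 := by exact_mod_cast (show n ≠ 0 by omega)
  rw [g, chebT_eval_cos_mul_pi_div (by omega), derivative_chebT_eval_cos_mul_pi_div hk hkn]
  field_simp
  ring

theorem neg_one_lt_cos_mul_pi_div {n j : ℕ} (hj : 0 < j) (hjn : j < n) :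
    -1 < cos (j * π / n) := by
  have hn : (0 : ℝ) < n := by exact_mod_cast hj.trans hjn
  rw [← cos_pi]
  refine cos_lt_cos_of_nonneg_of_le_pi (by positivity) le_rfl ?_
  rw [div_lt_iff₀ hn, mul_comm π]
  exact mul_lt_mul_of_pos_right (Nat.cast_lt.mpr hjn) pi_pos

theorem le_of_g_cos_sub_mul_pi_div_nonneg {n j : ℕ} (hj : 0 < j) (hjn : j < n)
    (hodd : Odd (n - j)) {a : ℝ} (hg : 0 ≤ g n a (cos ((n - j : ℕ) * π / n))) :
    a ≤ 1 / (1 + cos (j * π / n)) := by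
  have hn : (n : ℝ) ≠ 0 := by exact_mod_cast (show n ≠ 0 by omega)
  have hcos : cos ((n - j : ℕ) * π / n) = -cos (j * π / n) := by
    rw [Nat.cast_sub hjn.le, ← cos_pi_sub]
    congr 1
    field_simp
  rw [g_cos_mul_pi_div (by omega) (by omega), hodd.neg_one_pow, hcos] at hg
  rw [le_div_iff₀ (by linarith [neg_one_lt_cos_mul_pi_div hj hjn])]
  linarith

theorem upper_bound_on_a (n : ℕ) (hn : 4 ≤ n) (a : ℝ)
    (hg : ∀ x ∈ Set.Icc (-1 : ℝ) 1, 0 ≤ g n a x) :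
    (∀ k : ℕ, 1 ≤ k → k ≤ n - 1 →
        g n a (Real.cos (k * π / n)) = 2 + (-1 : ℝ) ^ k - a * (1 - Real.cos (k * π / n))) ∧
    (Even n → a ≤ 1 / (1 + Real.cos (π / n))) ∧
    (Odd n → a ≤ 1 / (1 + Real.cos (2 * π / n))) := by
  have hg_cos (x : ℝ) : 0 ≤ g n a (cos x) := hg _ ⟨neg_one_le_cos x, cos_le_one x⟩
  refine ⟨fun k hk hkn => g_cos_mul_pi_div hk (by omega) a, fun heven => ?_, fun hodd => ?_⟩
  · have h := le_of_g_cos_sub_mul_pi_div_nonneg (j := 1) one_pos (by omega)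
      (Nat.Even.sub_odd (by omega) heven odd_one) (hg_cos _)
    rwa [Nat.cast_one, one_mul] at h
  · have h := le_of_g_cos_sub_mul_pi_div_nonneg (j := 2) two_pos (by omega)
      (Nat.Odd.sub_even (by omega) hodd even_two) (hg_cos _)
    rwa [Nat.cast_ofNat] at h
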